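/- Let N ≥ 1 and fix R₀ > 0. Let (ε_n) be a sequence of positive reals with ε_n → 0, and let (u_n) ⊂ L²(ℝ^N) converge in L²(ℝ^N) to some u ≠ 0. Then Q_{ε_n}(u_n) → 0 in ℝ^N. -/

import Mathlib

open MeasureTheory Filter

/-- The truncation map `χ(x) = x` if `|x| ≤ R₀`, `χ(x) = R₀·x/|x|` if `|x| > R₀`. -/
noncomputable def chi {N : ℕ} (R₀ : ℝ) (x : EuclideanSpace ℝ (Fin N)) :
    EuclideanSpace ℝ (Fin N) :=
  if ‖x‖ ≤ R₀ then x else (R₀ / ‖x‖) • x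

/-- The barycenter-type map
`Q_ε(u) = (∫ χ(εx)·g(εx)·u(x)² dx) / (∫ g(εx)·u(x)² dx)`. -/
noncomputable def Qeps {N : ℕ} (R₀ : ℝ) (g : EuclideanSpace ℝ (Fin N) → ℝ) (ε : ℝ)
    (u : EuclideanSpace ℝ (Fin N) → ℝ) : EuclideanSpace ℝ (Fin N) :=
  (∫ x, g (ε • x) * (u x) ^ 2)⁻¹ • ∫ x, (g (ε • x) * (u x) ^ 2) • chi R₀ (ε • x)

/-! Since `u n → v` in `L²`, Cauchy–Schwarz gives `u n ² → v²` in `L¹`. Integrating against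
uniformly bounded weights that converge pointwise preserves this convergence, so the
denominator `∫ g(ε n x) u n²` tends to `g 0 * ∫ v² > 0`, while the numerator, whose weight
`g(ε n x) χ(ε n x)` tends to `g 0 • χ 0 = 0`, tends to `0`. -/

open Topology

section
variable {α : Type*} [MeasurableSpace α] {μ : Measure α}

theorem integral_abs_mul_le_sqrt_mul_sqrt {f g : α → ℝ} (hf : MemLp f 2 μ) (hg : MemLp g 2 μ) :
    ∫ x, |f x * g x| ∂μ ≤ √(∫ x, f x ^ 2 ∂μ) * √(∫ x, g x ^ 2 ∂μ) := by
  have h := integral_mul_le_Lp_mul_Lq_of_nonneg (μ := μ) Real.HolderConjugate.two_two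
    (ae_of_all _ fun x => abs_nonneg (f x)) (ae_of_all _ fun x => abs_nonneg (g x))
    (by rw [ENNReal.ofReal_ofNat]; exact hf.abs) (by rw [ENNReal.ofReal_ofNat]; exact hg.abs)
  simpa only [abs_mul, Real.rpow_two, sq_abs, Real.sqrt_eq_rpow, one_div] using h

theorem integral_sq_pos {f : α → ℝ} (hf : MemLp f 2 μ) (hne : ¬ f =ᵐ[μ] 0) :
    0 < ∫ x, f x ^ 2 ∂μ := by
  refine (integral_nonneg fun x => sq_nonneg (f x)).lt_of_ne fun h => hne ?_
  filter_upwards [(integral_eq_zero_iff_of_nonneg (fun x => sq_nonneg (f x))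
    hf.integrable_sq).mp h.symm] with x hx
  simpa using hx

theorem tendsto_integral_abs_sq_sub_sq {ι : Type*} {l : Filter ι} {u : ι → α → ℝ} {v : α → ℝ}
    (hu : ∀ n, MemLp (u n) 2 μ) (hv : MemLp v 2 μ)
    (h : Tendsto (fun n => ∫ x, (u n x - v x) ^ 2 ∂μ) l (𝓝 0)) :
    Tendsto (fun n => ∫ x, |u n x ^ 2 - v x ^ 2| ∂μ) l (𝓝 0) := by
  have hbound : ∀ n, ∫ x, |u n x ^ 2 - v x ^ 2| ∂μ ≤
      ∫ x, (u n x - v x) ^ 2 ∂μ + 2 * (√(∫ x, (u n x - v x) ^ 2 ∂μ) * √(∫ x, v x ^ 2 ∂μ)) := by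
    intro n
    have hd : MemLp (fun x => u n x - v x) 2 μ := (hu n).sub hv
    have hprod : Integrable (fun x => |(u n x - v x) * v x|) μ := (hd.integrable_mul hv).abs
    calc ∫ x, |u n x ^ 2 - v x ^ 2| ∂μ
        ≤ ∫ x, ((u n x - v x) ^ 2 + 2 * |(u n x - v x) * v x|) ∂μ := by
          refine integral_mono ((hu n).integrable_sq.sub hv.integrable_sq).abs
            (hd.integrable_sq.add (hprod.const_mul 2)) fun x => ?_
          have : u n x ^ 2 - v x ^ 2 = (u n x - v x) ^ 2 + 2 * ((u n x - v x) * v x) := by ring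
          rw [this]
          exact (abs_add_le _ _).trans (by rw [abs_mul, abs_two, abs_sq])
      _ = ∫ x, (u n x - v x) ^ 2 ∂μ + 2 * ∫ x, |(u n x - v x) * v x| ∂μ := by
          rw [integral_add hd.integrable_sq (hprod.const_mul 2), integral_const_mul]
      _ ≤ _ := by
          gcongr
          exact integral_abs_mul_le_sqrt_mul_sqrt hd hv
  have hlim : Tendsto (fun n => ∫ x, (u n x - v x) ^ 2 ∂μ
      + 2 * (√(∫ x, (u n x - v x) ^ 2 ∂μ) * √(∫ x, v x ^ 2 ∂μ))) l (𝓝 0) := by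
    simpa using h.add ((h.sqrt.mul_const _).const_mul 2)
  exact squeeze_zero (fun n => integral_nonneg fun x => abs_nonneg _) hbound hlim

theorem tendsto_integral_smul_of_tendsto_integral_abs_sub {E : Type*} [NormedAddCommGroup E]
    [NormedSpace ℝ E] {f : ℕ → α → ℝ} {f₀ : α → ℝ} {φ : ℕ → α → E} {φ₀ : α → E} {C : ℝ}
    (hf : ∀ n, Integrable (f n) μ) (hf₀ : Integrable f₀ μ)
    (hf_lim : Tendsto (fun n => ∫ x, |f n x - f₀ x| ∂μ) atTop (𝓝 0))
    (hφ_meas : ∀ n, AEStronglyMeasurable (φ n) μ) (hφ_bound : ∀ n x, ‖φ n x‖ ≤ C)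
    (hφ_lim : ∀ x, Tendsto (fun n => φ n x) atTop (𝓝 (φ₀ x))) :
    Tendsto (fun n => ∫ x, f n x • φ n x ∂μ) atTop (𝓝 (∫ x, f₀ x • φ₀ x ∂μ)) := by
  have hint : ∀ {h : α → ℝ}, Integrable h μ → ∀ n, Integrable (fun x => h x • φ n x) μ :=
    fun hh n => hh.smul_bdd C (hφ_meas n) (ae_of_all _ (hφ_bound n))
  have hfixed : Tendsto (fun n => ∫ x, f₀ x • φ n x ∂μ) atTop (𝓝 (∫ x, f₀ x • φ₀ x ∂μ)) :=
    tendsto_integral_of_dominated_convergence (fun x => C * |f₀ x|)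
      (fun n => (hint hf₀ n).aestronglyMeasurable) (hf₀.abs.const_mul C)
      (fun n => ae_of_all _ fun x => by
        rw [norm_smul, Real.norm_eq_abs, mul_comm]
        exact mul_le_mul_of_nonneg_right (hφ_bound n x) (abs_nonneg _))
      (ae_of_all _ fun x => (hφ_lim x).const_smul (f₀ x))
  have hdiff : ∀ n, ‖∫ x, f n x • φ n x ∂μ - ∫ x, f₀ x • φ n x ∂μ‖
      ≤ C * ∫ x, |f n x - f₀ x| ∂μ := by
    intro n
    rw [← integral_sub (hint (hf n) n) (hint hf₀ n), ← integral_const_mul]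
    refine norm_integral_le_of_norm_le (((hf n).sub hf₀).abs.const_mul C) (ae_of_all _ fun x => ?_)
    rw [← sub_smul, norm_smul, Real.norm_eq_abs, mul_comm]
    exact mul_le_mul_of_nonneg_right (hφ_bound n x) (abs_nonneg _)
  have hsmall : Tendsto (fun n => ∫ x, f n x • φ n x ∂μ - ∫ x, f₀ x • φ n x ∂μ) atTop (𝓝 0) :=
    squeeze_zero_norm hdiff (by simpa using hf_lim.const_mul C)
  simpa using hsmall.add hfixed

theorem tendsto_integral_sq_smul_of_tendsto_integral_sq_sub {E : Type*} [NormedAddCommGroup E]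
    [NormedSpace ℝ E] {u : ℕ → α → ℝ} {v : α → ℝ} {φ : ℕ → α → E} {φ₀ : α → E} {C : ℝ}
    (hu : ∀ n, MemLp (u n) 2 μ) (hv : MemLp v 2 μ)
    (h : Tendsto (fun n => ∫ x, (u n x - v x) ^ 2 ∂μ) atTop (𝓝 0))
    (hφ_meas : ∀ n, AEStronglyMeasurable (φ n) μ) (hφ_bound : ∀ n x, ‖φ n x‖ ≤ C)
    (hφ_lim : ∀ x, Tendsto (fun n => φ n x) atTop (𝓝 (φ₀ x))) :
    Tendsto (fun n => ∫ x, u n x ^ 2 • φ n x ∂μ) atTop (𝓝 (∫ x, v x ^ 2 • φ₀ x ∂μ)) :=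
  tendsto_integral_smul_of_tendsto_integral_abs_sub (fun n => (hu n).integrable_sq)
    hv.integrable_sq (tendsto_integral_abs_sq_sub_sq hu hv h) hφ_meas hφ_bound hφ_lim

end

theorem exists_forall_norm_le_of_tendsto_cocompact {X : Type*} [TopologicalSpace X]
    {g : X → ℝ} (hg : Continuous g) (hg0 : Tendsto g (cocompact X) (𝓝 0)) :
    ∃ C, ∀ x, ‖g x‖ ≤ C := by
  obtain ⟨C, hC⟩ := isBounded_iff_forall_norm_le.mp
    (ZeroAtInftyContinuousMap.isBounded_range ⟨⟨g, hg⟩, hg0⟩)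
  exact ⟨C, fun x => hC _ ⟨x, rfl⟩⟩

theorem norm_chi_le {N : ℕ} {R₀ : ℝ} (hR₀ : 0 ≤ R₀) (y : EuclideanSpace ℝ (Fin N)) :
    ‖chi R₀ y‖ ≤ min ‖y‖ R₀ := by
  unfold chi
  split_ifs with h
  · exact le_min le_rfl h
  · have hy : 0 < ‖y‖ := hR₀.trans_lt (not_le.mp h)
    rw [norm_smul, Real.norm_of_nonneg (div_nonneg hR₀ hy.le), div_mul_cancel₀ _ hy.ne']
    exact le_min (not_le.mp h).le le_rfl

theorem measurable_chi {N : ℕ} (R₀ : ℝ) : Measurable (chi (N := N) R₀) :=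
  Measurable.ite (measurableSet_le measurable_norm measurable_const) measurable_id
    ((measurable_const.div measurable_norm).smul measurable_id)

theorem tendsto_chi_zero {N : ℕ} {R₀ : ℝ} (hR₀ : 0 ≤ R₀) :
    Tendsto (chi (N := N) R₀) (𝓝 0) (𝓝 0) :=
  squeeze_zero_norm (fun y => (norm_chi_le hR₀ y).trans (min_le_left _ _)) tendsto_norm_zero

theorem Qeps_tendsto_zero_general (N : ℕ) (R₀ : ℝ) (hR₀ : 0 < R₀)
    (g : EuclideanSpace ℝ (Fin N) → ℝ) (hg : Continuous g) (hgpos : ∀ x, 0 < g x)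
    (hg0 : Tendsto g (cocompact _) (nhds 0))
    (ε : ℕ → ℝ) (hε0 : Tendsto ε atTop (nhds 0))
    (u : ℕ → EuclideanSpace ℝ (Fin N) → ℝ) (hun : ∀ n, MemLp (u n) 2 volume)
    (v : EuclideanSpace ℝ (Fin N) → ℝ) (hv : MemLp v 2 volume)
    (hvne : ¬ v =ᵐ[volume] 0)
    (hconv : Tendsto (fun n => ∫ x, (u n x - v x) ^ 2) atTop (nhds 0)) :
    Tendsto (fun n => Qeps R₀ g (ε n) (u n)) atTop
      (nhds (0 : EuclideanSpace ℝ (Fin N))) := by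
  obtain ⟨C, hC⟩ := exists_forall_norm_le_of_tendsto_cocompact hg hg0
  have hscale (x : EuclideanSpace ℝ (Fin N)) : Tendsto (fun n => ε n • x) atTop (𝓝 0) := by
    simpa using hε0.smul_const x
  have hmeas (n : ℕ) : Measurable fun x : EuclideanSpace ℝ (Fin N) => ε n • x :=
    measurable_const_smul (ε n)
  have hden : Tendsto (fun n => ∫ x, g (ε n • x) * u n x ^ 2) atTop
      (𝓝 (g 0 * ∫ x, v x ^ 2)) := by
    have h := tendsto_integral_sq_smul_of_tendsto_integral_sq_sub hun hv hconv
      (φ := fun n x => g (ε n • x)) (fun n => (hg.measurable.comp (hmeas n)).aestronglyMeasurable)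
      (fun n x => hC _) (fun x => (hg.tendsto 0).comp (hscale x))
    simpa only [smul_eq_mul, mul_comm _ (g _), integral_const_mul] using h
  have hnum : Tendsto (fun n => ∫ x, (g (ε n • x) * u n x ^ 2) • chi R₀ (ε n • x)) atTop
      (𝓝 0) := by
    have h := tendsto_integral_sq_smul_of_tendsto_integral_sq_sub hun hv hconv (C := C * R₀)
      (φ := fun n x => g (ε n • x) • chi R₀ (ε n • x))
      (fun n => ((hg.measurable.comp (hmeas n)).smul
        ((measurable_chi R₀).comp (hmeas n))).aestronglyMeasurable)
      (fun n x => (norm_smul_le _ _).trans <|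
        mul_le_mul (hC _) ((norm_chi_le hR₀.le _).trans (min_le_right _ _)) (norm_nonneg _)
          ((norm_nonneg _).trans (hC 0)))
      (fun x => ((hg.tendsto 0).comp (hscale x)).smul ((tendsto_chi_zero hR₀.le).comp (hscale x)))
    simpa only [smul_zero, integral_zero, smul_smul, mul_comm (g _)] using h
  have hlim_ne : g 0 * ∫ x, v x ^ 2 ≠ 0 := (mul_pos (hgpos 0) (integral_sq_pos hv hvne)).ne'
  rw [← smul_zero (g 0 * ∫ x, v x ^ 2)⁻¹]
  exact (hden.inv₀ hlim_ne).smul hnum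

/-- Fix `R₀ > 0` and `g` continuous, positive, vanishing at infinity. If
`ε_n → 0` with `ε_n > 0` and `(u_n) ⊂ L²(ℝ^N)` converges in `L²(ℝ^N)` to some `u ≠ 0`,
then `Q_{ε_n}(u_n) → 0`. -/
theorem Qeps_tendsto_zero (N : ℕ) (hN : 1 ≤ N) (R₀ : ℝ) (hR₀ : 0 < R₀)
    (g : EuclideanSpace ℝ (Fin N) → ℝ) (hg : Continuous g) (hgpos : ∀ x, 0 < g x)
    (hg0 : Tendsto g (cocompact _) (nhds 0))
    (ε : ℕ → ℝ) (hεpos : ∀ n, 0 < ε n) (hε0 : Tendsto ε atTop (nhds 0))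
    (u : ℕ → EuclideanSpace ℝ (Fin N) → ℝ) (hun : ∀ n, MemLp (u n) 2 volume)
    (v : EuclideanSpace ℝ (Fin N) → ℝ) (hv : MemLp v 2 volume)
    (hvne : ¬ v =ᵐ[volume] 0)
    (hconv : Tendsto (fun n => ∫ x, (u n x - v x) ^ 2) atTop (nhds 0)) :
    Tendsto (fun n => Qeps R₀ g (ε n) (u n)) atTop
      (nhds (0 : EuclideanSpace ℝ (Fin N))) :=
  Qeps_tendsto_zero_general N R₀ hR₀ g hg hgpos hg0 ε hε0 u hun v hv hvne hconv
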